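/- Let G be a connected weighted graph with Laplacian L and v₂ an eigenvector of the second smallest eigenvalue. For any r ≥ 0, the subgraph induced on the vertex set M(r) = {i ∈ V : v₂(i) + r ≥ 0} is connected; similarly for any r ≤ 0, the subgraph induced on {i ∈ V : v₂(i) + r ≤ 0} is connected. -/

import Mathlib

open Matrix

def lapW {n : ℕ} (W : Matrix (Fin n) (Fin n) ℝ) : Matrix (Fin n) (Fin n) ℝ :=
  Matrix.diagonal (fun i => ∑ j, W i j) - W

def connectedW {n : ℕ} (W : Matrix (Fin n) (Fin n) ℝ) : Prop :=
  ∀ i j : Fin n, Relation.ReflTransGen (fun a b => W a b ≠ 0) i j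

/-!
Fiedler's argument. Raise `r ≥ 0` slightly, to some `r' > r` with the same set `M(r)`: the
argument needs `r' > 0`. Put `u = v₂ + r'`, so that `L u = λ₂ (u - r')` and `M(r) = {u ≥ 0}`.
If `{u ≥ 0}` split into two nonempty parts `S`, `T` with no edges between them, consider the
truncations `x = 1_S u` and `y = 1_T u`. Edges leaving `S` end where `u < 0`, so `x ≥ u` around
every vertex of `S`, whence `(L x)_a ≤ (L u)_a` on `S` and `xᵀ L x ≤ λ₂ (‖x‖² - r' Σ x)`; the same
holds for `y`. The vector `z = (Σ y) x - (Σ x) y` sums to zero, hence is orthogonal to the kernel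
of `L` (the constants, by connectivity), so `zᵀ L z ≥ λ₂ ‖z‖²`; but the two estimates give
`zᵀ L z < λ₂ ‖z‖²`. The sets `{v₂ + r ≤ 0}` are the sets `{-v₂ - r ≥ 0}` for the eigenvector `-v₂`.
-/

open Filter Topology

theorem exists_gt_forall_nonneg_add_iff {ι : Type*} [Finite ι] (f : ι → ℝ) (r : ℝ) :
    ∃ r' > r, ∀ k, 0 ≤ f k + r' ↔ 0 ≤ f k + r := by
  have h : ∀ᶠ r' in 𝓝[>] r, ∀ k, 0 ≤ f k + r' ↔ 0 ≤ f k + r := by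
    refine eventually_all.2 fun k => ?_
    by_cases hk : 0 ≤ f k + r
    · filter_upwards [self_mem_nhdsWithin] with r' (hr' : r < r')
      exact iff_of_true (by linarith) hk
    · filter_upwards [nhdsWithin_le_nhds (eventually_lt_nhds (by linarith : r < -f k))]
        with r' hr'
      exact iff_of_false (by linarith) hk
  exact (eventually_mem_nhdsWithin.and h).exists

theorem Matrix.IsHermitian.mul_dotProduct_self_le {ι : Type*} [Fintype ι] [DecidableEq ι]
    {A : Matrix ι ι ℝ} (hA : A.IsHermitian) {c : ℝ} {z : ι → ℝ}
    (hz : ∀ k, hA.eigenvalues k < c → ⇑(hA.eigenvectorBasis k) ⬝ᵥ z = 0) :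
    c * (z ⬝ᵥ z) ≤ z ⬝ᵥ A *ᵥ z := by
  set b := hA.eigenvectorBasis
  have hAb : ∀ k, A *ᵥ z ⬝ᵥ b k = hA.eigenvalues k * (b k ⬝ᵥ z) := fun k => by
    rw [dotProduct_comm, dotProduct_mulVec, ← mulVec_transpose, (isHermitian_iff_isSymm.1 hA).eq,
      hA.mulVec_eigenvectorBasis, smul_dotProduct, smul_eq_mul]
  have hzz := b.sum_inner_mul_inner (WithLp.toLp 2 z) (WithLp.toLp 2 z)
  have hzAz := b.sum_inner_mul_inner (WithLp.toLp 2 z) (WithLp.toLp 2 (A *ᵥ z))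
  simp only [EuclideanSpace.inner_eq_star_dotProduct, star_trivial, hAb] at hzz hzAz
  rw [← hzz, dotProduct_comm z, ← hzAz, Finset.mul_sum]
  refine Finset.sum_le_sum fun k _ => ?_
  rw [dotProduct_comm z]
  rcases lt_or_ge (hA.eigenvalues k) c with hk | hk
  · simp [hz k hk]
  · nlinarith [mul_self_nonneg (b k ⬝ᵥ z)]

section

variable {n : ℕ} {W : Matrix (Fin n) (Fin n) ℝ}

def lapWNonzeroEigenvalues (W : Matrix (Fin n) (Fin n) ℝ) : Set ℝ :=
  {μ : ℝ | μ ≠ 0 ∧ ∃ w : Fin n → ℝ, w ≠ 0 ∧ (lapW W).mulVec w = μ • w}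

theorem lapW_mulVec_apply (W : Matrix (Fin n) (Fin n) ℝ) (x : Fin n → ℝ) (i : Fin n) :
    (lapW W *ᵥ x) i = ∑ j, W i j * (x i - x j) := by
  rw [lapW, sub_mulVec, Pi.sub_apply, mulVec_diagonal, Finset.sum_mul]
  simp only [mulVec, dotProduct, mul_sub, Finset.sum_sub_distrib]

theorem dotProduct_lapW_mulVec (W : Matrix (Fin n) (Fin n) ℝ) (x y : Fin n → ℝ) :
    x ⬝ᵥ lapW W *ᵥ y = ∑ i, ∑ j, W i j * x i * (y i - y j) := by
  simp only [dotProduct, lapW_mulVec_apply, Finset.mul_sum]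
  exact Finset.sum_congr rfl fun i _ => Finset.sum_congr rfl fun j _ => by ring

theorem lapW_mulVec_add_const (W : Matrix (Fin n) (Fin n) ℝ) (x : Fin n → ℝ) (c : ℝ) :
    lapW W *ᵥ (fun k => x k + c) = lapW W *ᵥ x := by
  ext i
  simp only [lapW_mulVec_apply, add_sub_add_right_eq_sub]

theorem lapW_isSymm (hsym : W.IsSymm) : (lapW W).IsSymm := by
  rw [Matrix.IsSymm, lapW, transpose_sub, diagonal_transpose, hsym]

theorem two_mul_dotProduct_lapW_mulVec_self (hsym : W.IsSymm) (x : Fin n → ℝ) :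
    2 * (x ⬝ᵥ lapW W *ᵥ x) = ∑ i, ∑ j, W i j * (x i - x j) ^ 2 := by
  have hswap : ∑ i, ∑ j, W i j * x i * (x i - x j) = ∑ i, ∑ j, W i j * x j * (x j - x i) := by
    rw [Finset.sum_comm]
    simp only [hsym.apply]
  rw [two_mul, dotProduct_lapW_mulVec]
  nth_rewrite 2 [hswap]
  simp only [← Finset.sum_add_distrib]
  exact Finset.sum_congr rfl fun i _ => Finset.sum_congr rfl fun j _ => by ring

theorem dotProduct_lapW_mulVec_self_nonneg (hsym : W.IsSymm) (hnonneg : ∀ i j, 0 ≤ W i j)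
    (x : Fin n → ℝ) : 0 ≤ x ⬝ᵥ lapW W *ᵥ x := by
  have h := two_mul_dotProduct_lapW_mulVec_self hsym x
  have : 0 ≤ ∑ i, ∑ j, W i j * (x i - x j) ^ 2 :=
    Fintype.sum_nonneg fun i => Fintype.sum_nonneg fun j => mul_nonneg (hnonneg i j) (sq_nonneg _)
  linarith

theorem pos_of_lapW_mulVec_eq_smul (hsym : W.IsSymm) (hnonneg : ∀ i j, 0 ≤ W i j)
    {μ : ℝ} {w : Fin n → ℝ} (hw : w ≠ 0) (hμ : μ ≠ 0) (h : lapW W *ᵥ w = μ • w) : 0 < μ := by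
  have hQ := dotProduct_lapW_mulVec_self_nonneg hsym hnonneg w
  rw [h, dotProduct_smul, smul_eq_mul] at hQ
  have hww : 0 < w ⬝ᵥ w := by simpa using dotProduct_self_star_pos_iff.2 hw
  exact lt_of_le_of_ne (nonneg_of_mul_nonneg_left hQ hww) hμ.symm

theorem apply_eq_of_lapW_mulVec_eq_zero (hsym : W.IsSymm) (hnonneg : ∀ i j, 0 ≤ W i j)
    (hconn : connectedW W) {x : Fin n → ℝ} (hx : lapW W *ᵥ x = 0) (i j : Fin n) :
    x i = x j := by
  have hsum : ∑ a, ∑ b, W a b * (x a - x b) ^ 2 = 0 := by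
    rw [← two_mul_dotProduct_lapW_mulVec_self hsym, hx, dotProduct_zero, mul_zero]
  have hedge : ∀ a b, W a b ≠ 0 → x a = x b := by
    intro a b hab
    have hterm_nonneg : ∀ a b, 0 ≤ W a b * (x a - x b) ^ 2 := fun a b =>
      mul_nonneg (hnonneg a b) (sq_nonneg _)
    have hrow := (Fintype.sum_eq_zero_iff_of_nonneg fun a =>
      Fintype.sum_nonneg (hterm_nonneg a)).1 hsum
    have hterm := (Fintype.sum_eq_zero_iff_of_nonneg (hterm_nonneg a)).1 (congrFun hrow a)
    simpa [hab, sub_eq_zero] using congrFun hterm b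
  induction hconn i j with
  | refl => rfl
  | tail _ hbc ih => exact ih.trans (hedge _ _ hbc)

theorem mul_dotProduct_self_le_lapW (hsym : W.IsSymm) (hnonneg : ∀ i j, 0 ≤ W i j)
    (hconn : connectedW W) {lam : ℝ}
    (hlam : lam ∈ lowerBounds (lapWNonzeroEigenvalues W))
    {z : Fin n → ℝ} (hz : ∑ i, z i = 0) :
    lam * (z ⬝ᵥ z) ≤ z ⬝ᵥ lapW W *ᵥ z := by
  have hL : (lapW W).IsHermitian := isHermitian_iff_isSymm.2 (lapW_isSymm hsym)
  refine hL.mul_dotProduct_self_le fun k hk => ?_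
  have hb := hL.mulVec_eigenvectorBasis k
  by_cases hμ : hL.eigenvalues k = 0
  · have hconst := apply_eq_of_lapW_mulVec_eq_zero hsym hnonneg hconn
      (by rw [hb, hμ, zero_smul] : lapW W *ᵥ ⇑(hL.eigenvectorBasis k) = 0)
    calc ⇑(hL.eigenvectorBasis k) ⬝ᵥ z = ∑ i, hL.eigenvectorBasis k k * z i :=
          Finset.sum_congr rfl fun i _ => by rw [hconst i k]
      _ = 0 := by rw [← Finset.mul_sum, hz, mul_zero]
  · have hb0 : ⇑(hL.eigenvectorBasis k) ≠ 0 :=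
      (WithLp.ofLp_eq_zero (p := 2)).not.2 (hL.eigenvectorBasis.orthonormal.ne_zero k)
    exact absurd (hlam ⟨hμ, _, hb0, hb⟩) (not_le.2 hk)

theorem lapW_mulVec_indicator_apply_le (hnonneg : ∀ i j, 0 ≤ W i j) {u : Fin n → ℝ}
    {S : Set (Fin n)} (hS : ∀ a ∈ S, ∀ b ∉ S, W a b ≠ 0 → u b < 0) {a : Fin n} (ha : a ∈ S) :
    (lapW W *ᵥ S.indicator u) a ≤ (lapW W *ᵥ u) a := by
  simp only [lapW_mulVec_apply, Set.indicator_of_mem ha]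
  refine Finset.sum_le_sum fun b _ => ?_
  by_cases hb : b ∈ S
  · rw [Set.indicator_of_mem hb]
  by_cases hab : W a b = 0
  · simp [hab]
  rw [Set.indicator_of_notMem hb]
  exact mul_le_mul_of_nonneg_left (by linarith [hS a ha b hb hab]) (hnonneg a b)

theorem dotProduct_lapW_mulVec_indicator_le (hnonneg : ∀ i j, 0 ≤ W i j) {lam r : ℝ}
    {u : Fin n → ℝ} (hu : ∀ k, (lapW W *ᵥ u) k = lam * (u k - r)) {S : Set (Fin n)}
    (hSu : ∀ a ∈ S, 0 ≤ u a) (hS : ∀ a ∈ S, ∀ b ∉ S, W a b ≠ 0 → u b < 0) :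
    S.indicator u ⬝ᵥ lapW W *ᵥ S.indicator u ≤
      lam * (S.indicator u ⬝ᵥ S.indicator u - r * ∑ k, S.indicator u k) := by
  have hpoint : ∀ k, S.indicator u k * (lapW W *ᵥ S.indicator u) k ≤
      lam * (S.indicator u k * S.indicator u k - r * S.indicator u k) := by
    intro k
    by_cases hk : k ∈ S
    · rw [Set.indicator_of_mem hk]
      calc u k * (lapW W *ᵥ S.indicator u) k ≤ u k * (lam * (u k - r)) :=
            mul_le_mul_of_nonneg_left (hu k ▸ lapW_mulVec_indicator_apply_le hnonneg hS hk)
              (hSu k hk)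
        _ = lam * (u k * u k - r * u k) := by ring
    · simp [Set.indicator_of_notMem hk]
  calc S.indicator u ⬝ᵥ lapW W *ᵥ S.indicator u
      ≤ ∑ k, lam * (S.indicator u k * S.indicator u k - r * S.indicator u k) :=
        Finset.sum_le_sum fun k _ => hpoint k
    _ = _ := by simp only [dotProduct, ← Finset.mul_sum, Finset.sum_sub_distrib]

theorem sum_indicator_pos (hnonneg : ∀ i j, 0 ≤ W i j) {lam r : ℝ} (hlam : 0 < lam)
    (hr : 0 < r) {u : Fin n → ℝ} (hu : ∀ k, (lapW W *ᵥ u) k = lam * (u k - r))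
    {S : Set (Fin n)} (hSu : ∀ a ∈ S, 0 ≤ u a) (hS : ∀ a ∈ S, ∀ b ∉ S, W a b ≠ 0 → u b < 0)
    {a : Fin n} (ha : a ∈ S) : 0 < ∑ k, S.indicator u k := by
  have hnn : ∀ k, 0 ≤ S.indicator u k := Set.indicator_nonneg hSu
  refine lt_of_le_of_ne (Fintype.sum_nonneg hnn) fun h0 => ?_
  have hzero : S.indicator u = 0 := (Fintype.sum_eq_zero_iff_of_nonneg hnn).1 h0.symm
  have hua : u a = 0 := by simpa [Set.indicator_of_mem ha] using congrFun hzero a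
  have := lapW_mulVec_indicator_apply_le hnonneg hS ha
  rw [hzero, mulVec_zero, hu a, hua] at this
  simp only [Pi.zero_apply, zero_sub] at this
  linarith [mul_pos hlam hr]

theorem indicator_dotProduct_lapW_mulVec_indicator {S T : Set (Fin n)} (hST : Disjoint S T)
    (hW : ∀ a ∈ S, ∀ b ∈ T, W a b = 0) (f g : Fin n → ℝ) :
    S.indicator f ⬝ᵥ lapW W *ᵥ T.indicator g = 0 := by
  rw [dotProduct_lapW_mulVec]
  refine Fintype.sum_eq_zero _ fun a => Fintype.sum_eq_zero _ fun b => ?_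
  by_cases ha : a ∈ S
  · by_cases hb : b ∈ T
    · simp [hW a ha b hb]
    · simp [Set.indicator_of_notMem hb, Set.indicator_of_notMem (hST.notMem_of_mem_left ha)]
  · simp [Set.indicator_of_notMem ha]

theorem indicator_dotProduct_indicator {S T : Set (Fin n)} (hST : Disjoint S T)
    (f g : Fin n → ℝ) : S.indicator f ⬝ᵥ T.indicator g = 0 := by
  refine Fintype.sum_eq_zero _ fun a => ?_
  by_cases ha : a ∈ S
  · simp [Set.indicator_of_notMem (hST.notMem_of_mem_left ha)]
  · simp [Set.indicator_of_notMem ha]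

theorem exists_edge_of_disjoint (hsym : W.IsSymm) (hnonneg : ∀ i j, 0 ≤ W i j)
    (hconn : connectedW W) {lam r : ℝ}
    (hlam : lam ∈ lowerBounds (lapWNonzeroEigenvalues W))
    (hlampos : 0 < lam) (hr : 0 < r) {u : Fin n → ℝ}
    (hu : ∀ k, (lapW W *ᵥ u) k = lam * (u k - r)) {S T : Set (Fin n)}
    (hSu : ∀ a ∈ S, 0 ≤ u a) (hS : ∀ a ∈ S, ∀ b ∉ S, W a b ≠ 0 → u b < 0)
    (hTu : ∀ a ∈ T, 0 ≤ u a) (hT : ∀ a ∈ T, ∀ b ∉ T, W a b ≠ 0 → u b < 0)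
    (hST : Disjoint S T) {a b : Fin n} (ha : a ∈ S) (hb : b ∈ T) :
    ∃ a ∈ S, ∃ b ∈ T, W a b ≠ 0 := by
  by_contra! hW
  set x := S.indicator u
  set y := T.indicator u
  set sx := ∑ k, x k
  set sy := ∑ k, y k
  have hsx : 0 < sx := sum_indicator_pos hnonneg hlampos hr hu hSu hS ha
  have hsy : 0 < sy := sum_indicator_pos hnonneg hlampos hr hu hTu hT hb
  have hxLy : x ⬝ᵥ lapW W *ᵥ y = 0 := indicator_dotProduct_lapW_mulVec_indicator hST hW u u
  have hyLx : y ⬝ᵥ lapW W *ᵥ x = 0 :=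
    indicator_dotProduct_lapW_mulVec_indicator hST.symm
      (fun b hb a ha => hsym.apply a b ▸ hW a ha b hb) u u
  have hxy : x ⬝ᵥ y = 0 := indicator_dotProduct_indicator hST u u
  have hyx : y ⬝ᵥ x = 0 := indicator_dotProduct_indicator hST.symm u u
  set z := sy • x - sx • y
  have hz : ∑ k, z k = 0 := by
    simp only [z, Pi.sub_apply, Pi.smul_apply, smul_eq_mul, Finset.sum_sub_distrib,
      ← Finset.mul_sum]
    ring
  have hzz : z ⬝ᵥ z = sy ^ 2 * (x ⬝ᵥ x) + sx ^ 2 * (y ⬝ᵥ y) := by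
    simp only [z, dotProduct_sub, sub_dotProduct, dotProduct_smul, smul_dotProduct, smul_eq_mul,
      hxy, hyx]
    ring
  have hzLz : z ⬝ᵥ lapW W *ᵥ z =
      sy ^ 2 * (x ⬝ᵥ lapW W *ᵥ x) + sx ^ 2 * (y ⬝ᵥ lapW W *ᵥ y) := by
    simp only [z, mulVec_sub, mulVec_smul, dotProduct_sub, sub_dotProduct, dotProduct_smul,
      smul_dotProduct, smul_eq_mul, hxLy, hyLx]
    ring
  have hx := dotProduct_lapW_mulVec_indicator_le hnonneg hu hSu hS
  have hy := dotProduct_lapW_mulVec_indicator_le hnonneg hu hTu hT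
  have hrayleigh := mul_dotProduct_self_le_lapW hsym hnonneg hconn hlam hz
  have hgap : 0 < lam * r * (sx * sy * (sx + sy)) := by positivity
  nlinarith [mul_le_mul_of_nonneg_left hx (sq_nonneg sy),
    mul_le_mul_of_nonneg_left hy (sq_nonneg sx)]

theorem reflTransGen_of_lapW_mulVec_eq (hsym : W.IsSymm) (hnonneg : ∀ i j, 0 ≤ W i j)
    (hconn : connectedW W) {lam r : ℝ}
    (hlam : lam ∈ lowerBounds (lapWNonzeroEigenvalues W))
    (hlampos : 0 < lam) (hr : 0 < r) {u : Fin n → ℝ}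
    (hu : ∀ k, (lapW W *ᵥ u) k = lam * (u k - r)) {i j : Fin n} (hi : 0 ≤ u i)
    (hj : 0 ≤ u j) :
    Relation.ReflTransGen (fun a b => 0 ≤ u a ∧ 0 ≤ u b ∧ W a b ≠ 0) i j := by
  set R := fun a b => 0 ≤ u a ∧ 0 ≤ u b ∧ W a b ≠ 0
  by_contra hij
  set S := {a | 0 ≤ u a ∧ Relation.ReflTransGen R i a}
  set T := {b | 0 ≤ u b ∧ ¬Relation.ReflTransGen R i b}
  have hS : ∀ a ∈ S, ∀ b ∉ S, W a b ≠ 0 → u b < 0 := by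
    intro a ha b hb hab
    by_contra! hub
    exact hb ⟨hub, ha.2.tail ⟨ha.1, hub, hab⟩⟩
  have hT : ∀ a ∈ T, ∀ b ∉ T, W a b ≠ 0 → u b < 0 := by
    intro a ha b hb hab
    by_contra! hub
    have hib : Relation.ReflTransGen R i b := by_contra fun h => hb ⟨hub, h⟩
    exact ha.2 (hib.tail ⟨hub, ha.1, hsym.apply a b ▸ hab⟩)
  have hST : Disjoint S T := Set.disjoint_left.2 fun a ha hb => hb.2 ha.2
  obtain ⟨a, ha, b, hb, hab⟩ := exists_edge_of_disjoint hsym hnonneg hconn hlam hlampos hr hu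
    (fun a ha => ha.1) hS (fun a ha => ha.1) hT hST
    (⟨hi, .refl⟩ : i ∈ S) (⟨hj, hij⟩ : j ∈ T)
  exact hb.2 (ha.2.tail ⟨ha.1, hb.1, hab⟩)

theorem reflTransGen_nonneg_add_of_lapW_mulVec_eq_smul (hsym : W.IsSymm)
    (hnonneg : ∀ i j, 0 ≤ W i j) (hconn : connectedW W) {lam : ℝ}
    (hlam : IsLeast (lapWNonzeroEigenvalues W) lam)
    {v : Fin n → ℝ} (hev : lapW W *ᵥ v = lam • v) {r : ℝ} (hr : 0 ≤ r) {i j : Fin n}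
    (hi : 0 ≤ v i + r) (hj : 0 ≤ v j + r) :
    Relation.ReflTransGen (fun a b => 0 ≤ v a + r ∧ 0 ≤ v b + r ∧ W a b ≠ 0) i j := by
  obtain ⟨hlam0, w, hw, hwev⟩ := hlam.1
  obtain ⟨r', hr', hiff⟩ := exists_gt_forall_nonneg_add_iff v r
  have hu : ∀ k, (lapW W *ᵥ fun k => v k + r') k = lam * ((v k + r') - r') := fun k => by
    rw [lapW_mulVec_add_const, hev, Pi.smul_apply, smul_eq_mul, add_sub_cancel_right]
  exact Relation.ReflTransGen.mono (fun a b h => ⟨(hiff a).1 h.1, (hiff b).1 h.2.1, h.2.2⟩) _ _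
    (reflTransGen_of_lapW_mulVec_eq hsym hnonneg hconn hlam.2
      (pos_of_lapW_mulVec_eq_smul hsym hnonneg hw hlam0 hwev) (by linarith) hu
      ((hiff i).2 hi) ((hiff j).2 hj))

end

theorem fiedler_sublevel_connected_general
    {n : ℕ} (W : Matrix (Fin n) (Fin n) ℝ)
    (hsym : W.IsSymm) (hnonneg : ∀ i j, 0 ≤ W i j)
    (hconn : connectedW W)
    (lam2 : ℝ) (v2 : Fin n → ℝ)
    (hlam2 : IsLeast {μ : ℝ | μ ≠ 0 ∧ ∃ w : Fin n → ℝ, w ≠ 0 ∧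
      (lapW W).mulVec w = μ • w} lam2)
    (hev : (lapW W).mulVec v2 = lam2 • v2) :
    (∀ r : ℝ, 0 ≤ r →
      ∀ i j : Fin n, 0 ≤ v2 i + r → 0 ≤ v2 j + r →
        Relation.ReflTransGen
          (fun a b => 0 ≤ v2 a + r ∧ 0 ≤ v2 b + r ∧ W a b ≠ 0) i j) ∧
    (∀ r : ℝ, r ≤ 0 →
      ∀ i j : Fin n, v2 i + r ≤ 0 → v2 j + r ≤ 0 →
        Relation.ReflTransGen
          (fun a b => v2 a + r ≤ 0 ∧ v2 b + r ≤ 0 ∧ W a b ≠ 0) i j) := by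
  refine ⟨fun r hr i j hi hj =>
    reflTransGen_nonneg_add_of_lapW_mulVec_eq_smul hsym hnonneg hconn hlam2 hev hr hi hj,
    fun r hr i j hi hj => ?_⟩
  have hev' : lapW W *ᵥ (-v2) = lam2 • -v2 := by rw [mulVec_neg, hev, smul_neg]
  refine Relation.ReflTransGen.mono (fun a b h => ?_) _ _
    (reflTransGen_nonneg_add_of_lapW_mulVec_eq_smul hsym hnonneg hconn hlam2 hev'
      (neg_nonneg.2 hr) (i := i) (j := j) (by rw [Pi.neg_apply]; linarith)
      (by rw [Pi.neg_apply]; linarith))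
  simp only [Pi.neg_apply] at h
  exact ⟨by linarith [h.1], by linarith [h.2.1], h.2.2⟩

/-- Fiedler's connectivity theorem.  For the Fiedler vector `v₂`
of a connected weighted graph, the subgraph induced on
`{i | v₂ i + r ≥ 0}` (for `r ≥ 0`) and on `{i | v₂ i + r ≤ 0}` (for `r ≤ 0`)
is connected. -/
theorem fiedler_sublevel_connected
    {n : ℕ} (W : Matrix (Fin n) (Fin n) ℝ)
    (hsym : W.IsSymm) (hnonneg : ∀ i j, 0 ≤ W i j)
    (hconn : connectedW W)
    (lam2 : ℝ) (v2 : Fin n → ℝ) (hv2 : v2 ≠ 0)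
    (hlam2 : IsLeast {μ : ℝ | μ ≠ 0 ∧ ∃ w : Fin n → ℝ, w ≠ 0 ∧
      (lapW W).mulVec w = μ • w} lam2)
    (hev : (lapW W).mulVec v2 = lam2 • v2) :
    (∀ r : ℝ, 0 ≤ r →
      ∀ i j : Fin n, 0 ≤ v2 i + r → 0 ≤ v2 j + r →
        Relation.ReflTransGen
          (fun a b => 0 ≤ v2 a + r ∧ 0 ≤ v2 b + r ∧ W a b ≠ 0) i j) ∧
    (∀ r : ℝ, r ≤ 0 →
      ∀ i j : Fin n, v2 i + r ≤ 0 → v2 j + r ≤ 0 →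
        Relation.ReflTransGen
          (fun a b => v2 a + r ≤ 0 ∧ v2 b + r ≤ 0 ∧ W a b ≠ 0) i j) :=
  fiedler_sublevel_connected_general W hsym hnonneg hconn lam2 v2 hlam2 hev
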